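/- Let D be a tournament missing disjoint paths of length 2 and let C = a_1b_1c_1, …, a_kb_kc_k be a double cycle in Δ(D). For each i ∈ {1,…,k} let (x_i, y_i) be an ordered pair with {x_i,y_i} = {a_i,b_i} or {x_i,y_i} = {b_i,c_i}. Then for every j ∈ {1,…,k} and every i ∈ {1,…,k} with i ≠ j: (1) if x_j→x_i then y_i→x_j; (2) if x_j→y_i then x_i→x_j; (3) if y_j→x_i then y_i→y_j; (4) if y_j→y_i then x_i→y_j. -/

import Mathlib

namespace SSNC

variable {V : Type*}

/-- The arc relation of an oriented graph: no digons (hence irreflexive). -/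
def Oriented (A : V → V → Prop) : Prop := ∀ u v, A u v → ¬ A v u

/-- `u ∈ N⁺⁺(v)`: the second out-neighborhood. -/
def SecondOut (A : V → V → Prop) (v u : V) : Prop :=
  u ≠ v ∧ ¬ A v u ∧ ∃ w, A v w ∧ A w u

/-- `{u, v}` is a missing edge of the digraph. -/
def IsMissing (A : V → V → Prop) (u v : V) : Prop :=
  u ≠ v ∧ ¬ A u v ∧ ¬ A v u

/-- The losing relation for a fixed labeling of the two pairs: `a→x`, `b→y`,
`y ∉ N⁺(a) ∪ N⁺⁺(a)` and `x ∉ N⁺(b) ∪ N⁺⁺(b)`. -/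
def LosesOrd (A : V → V → Prop) (a b x y : V) : Prop :=
  A a x ∧ A b y ∧ ¬ A a y ∧ ¬ SecondOut A a y ∧ ¬ A b x ∧ ¬ SecondOut A b x

/-- The missing edge `{a,b}` loses to the missing edge `{x,y}` (for some labeling). -/
def Loses (A : V → V → Prop) (a b x y : V) : Prop :=
  LosesOrd A a b x y ∨ LosesOrd A a b y x

/-- Degree of a vertex in the missing graph. -/
noncomputable def mdeg (A : V → V → Prop) (v : V) : ℕ :=
  ({w | IsMissing A v w} : Set V).ncard

/-- The missing graph, as a simple graph. -/
def missingGraph (A : V → V → Prop) : SimpleGraph V where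
  Adj u v := IsMissing A u v
  symm := by
    constructor
    rintro u v ⟨h1, h2, h3⟩
    exact ⟨h1.symm, h3, h2⟩
  loopless := by
    constructor
    rintro v ⟨h1, -, -⟩
    exact h1 rfl

/-- The missing graph is a vertex-disjoint union of paths
(equivalently: acyclic with maximum degree at most 2). -/
def MissingDisjointPaths (A : V → V → Prop) : Prop :=
  (missingGraph A).IsAcyclic ∧ ∀ v, mdeg A v ≤ 2

/-- The missing graph is a vertex-disjoint union of paths on exactly 3 vertices
(equivalently: every missing edge has one endpoint of missing-degree 1 and one of
missing-degree 2). -/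
def MissingPaths2 (A : V → V → Prop) : Prop :=
  ∀ u v, IsMissing A u v →
    (mdeg A u = 1 ∧ mdeg A v = 2) ∨ (mdeg A u = 2 ∧ mdeg A v = 1)

/-- The missing graph is a vertex-disjoint union of paths on 2 or 3 vertices. -/
def MissingPathsLe2 (A : V → V → Prop) : Prop :=
  ∀ u v, IsMissing A u v →
    (mdeg A u = 1 ∧ mdeg A v = 1) ∨ (mdeg A u = 1 ∧ mdeg A v = 2) ∨
    (mdeg A u = 2 ∧ mdeg A v = 1)

/-- Out-degree of the missing edge `{u,v}` in the dependency digraph `Δ(D)`: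
the number of missing edges it loses to. -/
noncomputable def outDegDelta (A : V → V → Prop) (u v : V) : ℕ :=
  ({f : Sym2 V | ∃ x y, f = s(x, y) ∧ IsMissing A x y ∧ Loses A u v x y}).ncard

/-- In-degree of the missing edge `{u,v}` in the dependency digraph `Δ(D)`:
the number of missing edges losing to it. -/
noncomputable def inDegDelta (A : V → V → Prop) (u v : V) : ℕ :=
  ({f : Sym2 V | ∃ x y, f = s(x, y) ∧ IsMissing A x y ∧ Loses A x y u v}).ncard

/-- `C = a₁b₁c₁, …, a_k b_k c_k` is a double cycle in `Δ(D)`: pairwise vertex-disjoint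
missing paths of length 2 (`k ≥ 2`), where each of `{aᵢ,bᵢ}, {bᵢ,cᵢ}` loses to each of
`{aᵢ₊₁,bᵢ₊₁}, {bᵢ₊₁,cᵢ₊₁}` (indices modulo `k`). -/
def IsDoubleCycle (A : V → V → Prop) (k : ℕ) (a b c : ZMod k → V) : Prop :=
  2 ≤ k ∧
  (∀ i, IsMissing A (a i) (b i) ∧ IsMissing A (b i) (c i) ∧ a i ≠ c i) ∧
  (∀ i j, i ≠ j → Disjoint ({a i, b i, c i} : Set V) {a j, b j, c j}) ∧
  (∀ i, Loses A (a i) (b i) (a (i + 1)) (b (i + 1)) ∧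
        Loses A (a i) (b i) (b (i + 1)) (c (i + 1)) ∧
        Loses A (b i) (c i) (a (i + 1)) (b (i + 1)) ∧
        Loses A (b i) (c i) (b (i + 1)) (c (i + 1)))

/-- `K(C)` for a double cycle `C`. -/
def Kset {k : ℕ} (a b c : ZMod k → V) : Set V :=
  {v | ∃ i, v = a i ∨ v = b i ∨ v = c i}

/-- Out-neighborhood in the subdigraph induced on `K`. -/
def outIn (A : V → V → Prop) (K : Set V) (v : V) : Set V := {u | u ∈ K ∧ A v u}

/-- In-neighborhood in the subdigraph induced on `K`. -/
def inIn (A : V → V → Prop) (K : Set V) (v : V) : Set V := {u | u ∈ K ∧ A u v}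

/-- Second out-neighborhood in the subdigraph induced on `K`. -/
def secondOutIn (A : V → V → Prop) (K : Set V) (v : V) : Set V :=
  {u | u ∈ K ∧ u ≠ v ∧ ¬ A v u ∧ ∃ w ∈ K, A v w ∧ A w u}

/-- Second in-neighborhood in the subdigraph induced on `K`. -/
def secondInIn (A : V → V → Prop) (K : Set V) (v : V) : Set V :=
  {u | u ∈ K ∧ u ≠ v ∧ ¬ A u v ∧ ∃ w ∈ K, A u w ∧ A w v}

/-!
A vertex `z` of the `j`-th path never dominates both ends of a missing edge `{p, q}` of another
path `i`. For `i = j + 1` this is part of the definition of losing. Otherwise the edge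
`{a_{i-1}, b_{i-1}}` loses to `{p, q}`, so an arc from `a_{i-1}` or `b_{i-1}` to `z` would put
`p` or `q` into its second out-neighbourhood; as vertices of distinct paths are adjacent (the
vertex set of each path is closed under missing edges), `z` dominates `{a_{i-1}, b_{i-1}}`, and we
walk back along the cycle down to path `j + 1`. Since `x_j` and `y_j` are adjacent to both ends of
`{x_i, y_i}`, each of the four implications follows.
-/

section Digraph

variable {A : V → V → Prop} {u v w p q s t z : V}

theorem IsMissing.symm (h : IsMissing A u v) : IsMissing A v u :=
  ⟨h.1.symm, h.2.2, h.2.1⟩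

theorem LosesOrd.swap (h : LosesOrd A u v p q) : LosesOrd A v u q p :=
  ⟨h.2.1, h.1, h.2.2.2.2.1, h.2.2.2.2.2, h.2.2.1, h.2.2.2.1⟩

theorem Loses.swap_left (h : Loses A u v p q) : Loses A v u p q :=
  h.elim (Or.inr ∘ LosesOrd.swap) (Or.inl ∘ LosesOrd.swap)

theorem Loses.swap_right (h : Loses A u v p q) : Loses A u v q p :=
  h.symm

theorem Loses.not_dominates_of_mem (h : Loses A u v p q) (hz : z = u ∨ z = v) :
    ¬ (A z p ∧ A z q) := by
  rintro ⟨hzp, hzq⟩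
  rcases h with ⟨-, -, hup, -, hvq, -⟩ | ⟨-, -, huq, -, hvp, -⟩ <;>
    rcases hz with rfl | rfl <;> contradiction

theorem not_arc_of_not_secondOut (hqu : q ≠ u) (huq : ¬ A u q) (hsec : ¬ SecondOut A u q)
    (hzq : A z q) : ¬ A u z :=
  fun huz => hsec ⟨hqu, huq, z, huz, hzq⟩

theorem Loses.not_arc_of_dominates (h : Loses A u v p q) (hpu : p ≠ u) (hqu : q ≠ u)
    (hpv : p ≠ v) (hqv : q ≠ v) (hzp : A z p) (hzq : A z q) : ¬ A u z ∧ ¬ A v z := by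
  rcases h with ⟨-, -, huq, hsu, hvp, hsv⟩ | ⟨-, -, hup, hsu, hvq, hsv⟩
  · exact ⟨not_arc_of_not_secondOut hqu huq hsu hzq, not_arc_of_not_secondOut hpv hvp hsv hzp⟩
  · exact ⟨not_arc_of_not_secondOut hpu hup hsu hzp, not_arc_of_not_secondOut hqv hvq hsv hzq⟩

theorem MissingPaths2.setOf_isMissing_center (hP : MissingPaths2 A) (huv : IsMissing A u v)
    (hvw : IsMissing A v w) (huw : u ≠ w) : {t | IsMissing A v t} = {u, w} := by
  have hsub : ({u, w} : Set V) ⊆ {t | IsMissing A v t} := by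
    rintro t (rfl | rfl)
    exacts [huv.symm, hvw]
  have hv : mdeg A v ≠ 0 ∧ mdeg A v ≤ 2 := by
    rcases hP u v huv with ⟨-, h⟩ | ⟨-, h⟩ <;> omega
  refine (Set.eq_of_subset_of_ncard_le hsub ?_ (Set.finite_of_ncard_ne_zero hv.1)).symm
  rw [Set.ncard_pair huw]
  exact hv.2

theorem MissingPaths2.setOf_isMissing_end (hP : MissingPaths2 A) (huv : IsMissing A u v)
    (hvw : IsMissing A v w) (huw : u ≠ w) : {t | IsMissing A u t} = {v} := by
  have hv : mdeg A v = 2 := by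
    rw [mdeg, hP.setOf_isMissing_center huv hvw huw, Set.ncard_pair huw]
  obtain ⟨t, ht⟩ : ∃ t, {t | IsMissing A u t} = {t} := by
    rcases hP u v huv with ⟨h, -⟩ | ⟨-, h⟩
    · exact Set.ncard_eq_one.mp h
    · omega
  have hvt : v = t := Set.mem_singleton_iff.mp (ht ▸ huv)
  rw [ht, hvt]

theorem MissingPaths2.mem_of_isMissing (hP : MissingPaths2 A) (huv : IsMissing A u v)
    (hvw : IsMissing A v w) (huw : u ≠ w) (hs : s ∈ ({u, v, w} : Set V))
    (hst : IsMissing A s t) : t ∈ ({u, v, w} : Set V) := by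
  have hst : t ∈ {t | IsMissing A s t} := hst
  rcases hs with rfl | rfl | rfl
  · rw [hP.setOf_isMissing_end huv hvw huw] at hst
    exact Or.inr (Or.inl hst)
  · rw [hP.setOf_isMissing_center huv hvw huw] at hst
    rcases hst with rfl | rfl <;> simp
  · rw [hP.setOf_isMissing_end hvw.symm huv.symm huw.symm] at hst
    exact Or.inr (Or.inl hst)

end Digraph

theorem ZMod.add_natCast_ne_self {k n : ℕ} (j : ZMod k) (hn : 0 < n) (hnk : n < k) :
    j + n ≠ j := by
  rw [add_ne_left, Ne, ZMod.natCast_eq_zero_iff]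
  exact Nat.not_dvd_of_pos_of_lt hn hnk

section DoubleCycle

variable {A : V → V → Prop} {k : ℕ} {a b c : ZMod k → V} {i j : ZMod k} {u v p q z : V}

def IsPathEdge (a b c : ZMod k → V) (i : ZMod k) (p q : V) : Prop :=
  ({p, q} : Set V) = {a i, b i} ∨ ({p, q} : Set V) = {b i, c i}

theorem isPathEdge_iff : IsPathEdge a b c i p q ↔
    (p = a i ∧ q = b i) ∨ (p = b i ∧ q = a i) ∨ (p = b i ∧ q = c i) ∨ (p = c i ∧ q = b i) := by
  simp only [IsPathEdge, Set.pair_eq_pair_iff, or_assoc]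

theorem IsPathEdge.symm (h : IsPathEdge a b c i p q) : IsPathEdge a b c i q p := by
  rw [isPathEdge_iff] at h ⊢
  tauto

theorem IsPathEdge.mem_left (h : IsPathEdge a b c i p q) : p ∈ ({a i, b i, c i} : Set V) := by
  rw [isPathEdge_iff] at h
  rcases h with ⟨rfl, -⟩ | ⟨rfl, -⟩ | ⟨rfl, -⟩ | ⟨rfl, -⟩ <;> simp

theorem IsPathEdge.mem_right (h : IsPathEdge a b c i p q) : q ∈ ({a i, b i, c i} : Set V) :=
  h.symm.mem_left

namespace IsDoubleCycle

variable (hC : IsDoubleCycle A k a b c)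
include hC

theorem succ_ne (i : ZMod k) : i + 1 ≠ i := by
  simpa using ZMod.add_natCast_ne_self i one_pos hC.1

theorem ne_of_mem (hij : i ≠ j) (hp : p ∈ ({a i, b i, c i} : Set V))
    (hq : q ∈ ({a j, b j, c j} : Set V)) : p ≠ q := by
  rintro rfl
  exact Set.disjoint_left.mp (hC.2.2.1 i j hij) hp hq

theorem arc_or_arc (hP : MissingPaths2 A) (hij : i ≠ j) (hp : p ∈ ({a i, b i, c i} : Set V))
    (hq : q ∈ ({a j, b j, c j} : Set V)) : A p q ∨ A q p := by
  by_contra! h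
  obtain ⟨hab, hbc, hac⟩ := hC.2.1 i
  exact hC.ne_of_mem hij (hP.mem_of_isMissing hab hbc hac hp ⟨hC.ne_of_mem hij hp hq, h⟩) hq rfl

theorem loses (hu : IsPathEdge a b c i u v) (hp : IsPathEdge a b c (i + 1) p q) :
    Loses A u v p q := by
  obtain ⟨l1, l2, l3, l4⟩ := hC.2.2.2 i
  rw [isPathEdge_iff] at hu hp
  have hu' : Loses A u v (a (i + 1)) (b (i + 1)) ∧ Loses A u v (b (i + 1)) (c (i + 1)) := by
    rcases hu with ⟨rfl, rfl⟩ | ⟨rfl, rfl⟩ | ⟨rfl, rfl⟩ | ⟨rfl, rfl⟩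
    exacts [⟨l1, l2⟩, ⟨l1.swap_left, l2.swap_left⟩, ⟨l3, l4⟩, ⟨l3.swap_left, l4.swap_left⟩]
  rcases hp with ⟨rfl, rfl⟩ | ⟨rfl, rfl⟩ | ⟨rfl, rfl⟩ | ⟨rfl, rfl⟩
  exacts [hu'.1, hu'.1.swap_right, hu'.2, hu'.2.swap_right]

theorem not_dominates_succ (hz : z ∈ ({a j, b j, c j} : Set V))
    (he : IsPathEdge a b c (j + 1) p q) : ¬ (A z p ∧ A z q) := by
  rcases hz with rfl | rfl | rfl
  · exact (hC.loses (Or.inl rfl) he).not_dominates_of_mem (Or.inl rfl)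
  · exact (hC.loses (Or.inl rfl) he).not_dominates_of_mem (Or.inr rfl)
  · exact (hC.loses (Or.inr rfl) he).not_dominates_of_mem (Or.inr rfl)

theorem dominates_of_dominates_succ (hP : MissingPaths2 A) (hij : i ≠ j)
    (hz : z ∈ ({a j, b j, c j} : Set V)) (he : IsPathEdge a b c (i + 1) p q)
    (hzp : A z p) (hzq : A z q) : A z (a i) ∧ A z (b i) := by
  have ha : a i ∈ ({a i, b i, c i} : Set V) := by simp
  have hb : b i ∈ ({a i, b i, c i} : Set V) := by simp
  have hii := hC.succ_ne i
  obtain ⟨hna, hnb⟩ := (hC.loses (Or.inl rfl) he).not_arc_of_dominates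
    (hC.ne_of_mem hii he.mem_left ha) (hC.ne_of_mem hii he.mem_right ha)
    (hC.ne_of_mem hii he.mem_left hb) (hC.ne_of_mem hii he.mem_right hb) hzp hzq
  exact ⟨(hC.arc_or_arc hP hij ha hz).resolve_left hna,
    (hC.arc_or_arc hP hij hb hz).resolve_left hnb⟩

theorem not_dominates_add_natCast (hP : MissingPaths2 A) (n : ℕ) (hn : n + 1 < k)
    (hz : z ∈ ({a j, b j, c j} : Set V)) (he : IsPathEdge a b c (j + (n + 1 : ℕ)) p q) :
    ¬ (A z p ∧ A z q) := by
  induction n generalizing p q with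
  | zero => exact hC.not_dominates_succ hz (by simpa using he)
  | succ n ih =>
    rintro ⟨hzp, hzq⟩
    have hsucc : j + ((n + 1 + 1 : ℕ) : ZMod k) = j + (n + 1 : ℕ) + 1 := by
      push_cast
      ring
    rw [hsucc] at he
    exact ih (by omega) (Or.inl rfl) <| hC.dominates_of_dominates_succ hP
      (ZMod.add_natCast_ne_self j (by omega) (by omega)) hz he hzp hzq

theorem not_dominates (hP : MissingPaths2 A) (hij : i ≠ j) (hz : z ∈ ({a j, b j, c j} : Set V))
    (he : IsPathEdge a b c i p q) : ¬ (A z p ∧ A z q) := by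
  have : NeZero k := ⟨by have := hC.1; omega⟩
  obtain ⟨n, hn⟩ : ∃ n, (i - j).val = n + 1 :=
    Nat.exists_eq_add_one.mpr (Nat.pos_of_ne_zero ((ZMod.val_ne_zero _).mpr (sub_ne_zero.mpr hij)))
  have hi : j + ((n + 1 : ℕ) : ZMod k) = i := by
    rw [← hn, ZMod.natCast_zmod_val]
    ring
  exact hC.not_dominates_add_natCast hP n (hn ▸ ZMod.val_lt _) hz (hi ▸ he)

theorem arc_of_arc (hP : MissingPaths2 A) (hij : i ≠ j) (hz : z ∈ ({a j, b j, c j} : Set V))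
    (he : IsPathEdge a b c i p q) (hzq : A z q) : A p z :=
  (hC.arc_or_arc hP hij.symm hz he.mem_left).resolve_left fun hzp =>
    hC.not_dominates hP hij hz he ⟨hzp, hzq⟩

end IsDoubleCycle

end DoubleCycle

theorem stmt5_general {V : Type*} (A : V → V → Prop)
    (hP : MissingPaths2 A) (k : ℕ) (a b c : ZMod k → V)
    (hC : IsDoubleCycle A k a b c) (x y : ZMod k → V)
    (hsel : ∀ i, ({x i, y i} : Set V) = ({a i, b i} : Set V) ∨
                 ({x i, y i} : Set V) = ({b i, c i} : Set V)) :
    ∀ j i, i ≠ j →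
      (A (x j) (x i) → A (y i) (x j)) ∧
      (A (x j) (y i) → A (x i) (x j)) ∧
      (A (y j) (x i) → A (y i) (y j)) ∧
      (A (y j) (y i) → A (x i) (y j)) := by
  intro j i hij
  have hE : ∀ i, IsPathEdge a b c i (x i) (y i) := hsel
  have hx := (hE j).mem_left
  have hy := (hE j).mem_right
  exact ⟨hC.arc_of_arc hP hij hx (hE i).symm, hC.arc_of_arc hP hij hx (hE i),
    hC.arc_of_arc hP hij hy (hE i).symm, hC.arc_of_arc hP hij hy (hE i)⟩

/-- Lemma 4.6. -/
theorem stmt5 {V : Type*} [Fintype V] (A : V → V → Prop) (hA : Oriented A)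
    (hP : MissingPaths2 A) (k : ℕ) (a b c : ZMod k → V)
    (hC : IsDoubleCycle A k a b c) (x y : ZMod k → V)
    (hsel : ∀ i, ({x i, y i} : Set V) = ({a i, b i} : Set V) ∨
                 ({x i, y i} : Set V) = ({b i, c i} : Set V)) :
    ∀ j i, i ≠ j →
      (A (x j) (x i) → A (y i) (x j)) ∧
      (A (x j) (y i) → A (x i) (x j)) ∧
      (A (y j) (x i) → A (y i) (y j)) ∧
      (A (y j) (y i) → A (x i) (y j)) :=
  stmt5_general A hP k a b c hC x y hsel

end SSNC
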